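/- Let V be a real inner product space with orthogonal complex structure J, R a curvature-type tensor extended complex-bilinearly to V⊗ℂ, and {x,y} an orthonormal antiholomorphic pair. Then Re R^ℂ(x+ity, J(x+ity), J(x+ity), x+ity) = H(x) − t²{K(x,Jy) + 2R(x,Jx,Jy,y) + 2R(x,Jy,Jx,y) + K(Jx,y)} + t⁴H(y) for all real t, where H(X)=R(X,JX,JX,X) and K(X,Y)=R(X,Y,Y,X). -/

import Mathlib

/-!
Expanding by multilinearity, the real part of `R^ℂ(x + ity, J(x + ity), J(x + ity), x + ity)`
collects the terms with an even number of imaginary slots: `H(x)`, `t⁴ H(y)`, and six `t²`-terms.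
Pair symmetry together with the two antisymmetries identifies three of these with the other three.
-/

open scoped RealInnerProductSpace

/-- The complex-multilinear extension of a quadrilinear map `R` to the
complexification, where a pair `(u, v) : V × V` represents `u + i v`. -/
noncomputable def curvExtC {V : Type*} [AddCommGroup V] [Module ℝ V]
    (R : V →ₗ[ℝ] V →ₗ[ℝ] V →ₗ[ℝ] V →ₗ[ℝ] ℝ) (X Y Z W : V × V) : ℂ :=
  ∑ a : Fin 2, ∑ b : Fin 2, ∑ c : Fin 2, ∑ d : Fin 2,
    Complex.I ^ ((a : ℕ) + (b : ℕ) + (c : ℕ) + (d : ℕ)) *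
      ((R (if a = 0 then X.1 else X.2) (if b = 0 then Y.1 else Y.2)
          (if c = 0 then Z.1 else Z.2) (if d = 0 then W.1 else W.2) : ℝ) : ℂ)

section Complexification

variable {V : Type*} [AddCommGroup V] [Module ℝ V] (R : V →ₗ[ℝ] V →ₗ[ℝ] V →ₗ[ℝ] V →ₗ[ℝ] ℝ)

/-- Only the terms with an even number of imaginary slots are real, with sign `i ^ (2k) = (-1) ^ k`. -/
theorem re_curvExtC (X Y Z W : V × V) :
    (curvExtC R X Y Z W).re =
      R X.1 Y.1 Z.1 W.1
        - (R X.2 Y.2 Z.1 W.1 + R X.2 Y.1 Z.2 W.1 + R X.2 Y.1 Z.1 W.2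
            + R X.1 Y.2 Z.2 W.1 + R X.1 Y.2 Z.1 W.2 + R X.1 Y.1 Z.2 W.2)
        + R X.2 Y.2 Z.2 W.2 := by
  simp only [curvExtC, Fin.sum_univ_two, Fin.isValue, Fin.val_zero, Fin.val_one, reduceIte,
    one_ne_zero, Complex.add_re, Complex.re_mul_ofReal]
  norm_num [pow_succ, Complex.I_mul_I]
  ring

theorem swap_swap_of_antisymm (hR1 : ∀ X Y Z W : V, R X Y Z W = - R Y X Z W)
    (hR2 : ∀ X Y Z W : V, R X Y Z W = - R X Y W Z) (X Y Z W : V) :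
    R Y X W Z = R X Y Z W := by
  rw [hR1, hR2, neg_neg]

end Complexification

theorem re_complexified_holomorphic_expansion_general
    {V : Type*} [NormedAddCommGroup V] [InnerProductSpace ℝ V]
    (J : V →ₗ[ℝ] V)
    (R : V →ₗ[ℝ] V →ₗ[ℝ] V →ₗ[ℝ] V →ₗ[ℝ] ℝ)
    (hR1 : ∀ X Y Z W : V, R X Y Z W = - R Y X Z W)
    (hR2 : ∀ X Y Z W : V, R X Y Z W = - R X Y W Z)
    (hR3 : ∀ X Y Z W : V, R X Y Z W = R Z W X Y)
    (x y : V) :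
    ∀ t : ℝ,
      (curvExtC R (x, t • y) (J x, t • J y) (J x, t • J y) (x, t • y)).re =
        R x (J x) (J x) x
          - t ^ 2 * (R x (J y) (J y) x + 2 * R x (J x) (J y) y
              + 2 * R x (J y) (J x) y + R (J x) y y (J x))
          + t ^ 4 * R y (J y) (J y) y := by
  intro t
  have hswap := swap_swap_of_antisymm R hR1 hR2
  rw [re_curvExtC]
  simp only [map_smul, LinearMap.smul_apply, smul_eq_mul]
  linear_combination (-t ^ 2) * ((hR3 y (J y) (J x) x).trans (hswap _ _ _ _)
    + (hR3 y (J x) (J y) x).trans (hswap _ _ _ _) + hR3 y (J x) (J x) y)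

/-- The expansion underlying Theorem 5: for an orthonormal antiholomorphic pair `{x,y}`,
`Re R^ℂ(x+ity, J(x+ity), J(x+ity), x+ity)
  = H(x) − t²{K(x,Jy) + 2R(x,Jx,Jy,y) + 2R(x,Jy,Jx,y) + K(Jx,y)} + t⁴H(y)`. -/
theorem re_complexified_holomorphic_expansion
    {V : Type*} [NormedAddCommGroup V] [InnerProductSpace ℝ V]
    (J : V →ₗ[ℝ] V) (hJ2 : ∀ X : V, J (J X) = -X)
    (hJg : ∀ X Y : V, ⟪J X, J Y⟫ = ⟪X, Y⟫)
    (R : V →ₗ[ℝ] V →ₗ[ℝ] V →ₗ[ℝ] V →ₗ[ℝ] ℝ)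
    (hR1 : ∀ X Y Z W : V, R X Y Z W = - R Y X Z W)
    (hR2 : ∀ X Y Z W : V, R X Y Z W = - R X Y W Z)
    (hR3 : ∀ X Y Z W : V, R X Y Z W = R Z W X Y)
    (hB : ∀ X Y Z W : V, R X Y Z W + R Y Z X W + R Z X Y W = 0)
    (x y : V) (hx : ‖x‖ = 1) (hy : ‖y‖ = 1) (hxy : ⟪x, y⟫ = 0) (hxJy : ⟪x, J y⟫ = 0) :
    ∀ t : ℝ,
      (curvExtC R (x, t • y) (J x, t • J y) (J x, t • J y) (x, t • y)).re =
        R x (J x) (J x) x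
          - t ^ 2 * (R x (J y) (J y) x + 2 * R x (J x) (J y) y
              + 2 * R x (J y) (J x) y + R (J x) y y (J x))
          + t ^ 4 * R y (J y) (J y) y :=
  re_complexified_holomorphic_expansion_general J R hR1 hR2 hR3 x y
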